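/- arXiv:2411.11587 — 2 statements merged into one kernel-verified Lean document; each statement's English description precedes it below -/
import Mathlib

section
/- Let |·| be a norm on ℝⁿ with induced logarithmic norm μ, and let c ∈ ℝ. If x : [t₀, T] → ℝⁿ is differentiable at t ∈ (t₀, T) and ẋ(t) = M x(t) for some matrix M ∈ ℝⁿˣⁿ with μ(M) ≤ c, then the upper right Dini derivative of the function τ ↦ |x(τ)| at t satisfies D⁺|x(t)| ≤ c|x(t)|, where D⁺g(t) = limsup_{h→0⁺} (g(t+h) − g(t))/h. -/
open Filter Topology Set Matrix

/-- `N` is a norm on `ℝⁿ`. -/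
def IsNorm {n : ℕ} (N : (Fin n → ℝ) → ℝ) : Prop :=
  (∀ x y, N (x + y) ≤ N x + N y) ∧
  (∀ (a : ℝ) (x : Fin n → ℝ), N (a • x) = |a| * N x) ∧
  (∀ x, N x = 0 → x = 0)

/-- The operator norm on `ℝⁿˣⁿ` induced by the norm `N`. -/
noncomputable def opNorm {n : ℕ} (N : (Fin n → ℝ) → ℝ) (A : Matrix (Fin n) (Fin n) ℝ) : ℝ :=
  sSup ((fun x => N (A.mulVec x)) '' {x | N x = 1})

/-- The logarithmic norm `μ(A) = lim_{h → 0⁺} (‖I + hA‖ - 1)/h` induced by the norm `N`. -/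
noncomputable def logNorm {n : ℕ} (N : (Fin n → ℝ) → ℝ) (A : Matrix (Fin n) (Fin n) ℝ) : ℝ :=
  limUnder (𝓝[>] (0 : ℝ)) (fun h => (opNorm N (1 + h • A) - 1) / h)

/-- The upper right Dini derivative `D⁺g(t) = limsup_{h → 0⁺} (g(t+h) - g(t))/h`. -/
noncomputable def diniDeriv (g : ℝ → ℝ) (t : ℝ) : ℝ :=
  Filter.limsup (fun h => (g (t + h) - g t) / h) (𝓝[>] (0 : ℝ))

/-!
The norm `N` is the norm of a genuine normed space structure on `ℝⁿ`, in which `opNorm N` becomes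
the operator norm. As `h ↦ ‖1 + h • A‖` is convex, the quotients `(‖1 + h • A‖ - 1) / h` are
monotone in `h > 0`, so they converge (to the right derivative at `0`) and `logNorm` is an honest
limit rather than a junk value of `limUnder`. Finally `x (t + h) = (1 + h • A) (x t) + o(h)` gives
`‖x (t + h)‖ ≤ ‖1 + h • A‖ * ‖x t‖ + o(h)`, which is the Dini estimate.
-/

namespace IsNorm

variable {n : ℕ} {N : (Fin n → ℝ) → ℝ}

lemma map_zero (hN : IsNorm N) : N 0 = 0 := by
  simpa using hN.2.1 0 0

lemma nonneg (hN : IsNorm N) (v : Fin n → ℝ) : 0 ≤ N v := by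
  have h := hN.1 v (-v)
  rw [add_neg_cancel, hN.map_zero, ← neg_one_smul ℝ v, hN.2.1] at h
  norm_num at h
  linarith

lemma exists_linearEquiv_norm_eq (hN : IsNorm N) :
    ∃ (E : Type) (_ : NormedAddCommGroup E) (_ : NormedSpace ℝ E)
      (e : (Fin n → ℝ) ≃ₗ[ℝ] E), ∀ v, ‖e v‖ = N v := by
  let _ : Norm (Fin n → ℝ) := ⟨N⟩
  have core : NormedSpace.Core ℝ (Fin n → ℝ) :=
    { norm_nonneg := hN.nonneg
      norm_smul := fun a v => hN.2.1 a v
      norm_triangle := hN.1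
      norm_eq_zero_iff := fun v => ⟨hN.2.2 v, fun hv => hv ▸ hN.map_zero⟩ }
  let G : NormedAddCommGroup (Fin n → ℝ) := .ofCore core
  exact ⟨Fin n → ℝ, G, @NormedSpace.ofCore _ _ _ G.toSeminormedAddCommGroup _ core,
    LinearEquiv.refl ℝ _, fun v => rfl⟩

end IsNorm

section NormedSpace

variable {E : Type*} [NormedAddCommGroup E] [NormedSpace ℝ E]

theorem opNorm_eq_norm_of_intertwines {n : ℕ} {N : (Fin n → ℝ) → ℝ}
    (e : (Fin n → ℝ) ≃ₗ[ℝ] E) (he : ∀ v, ‖e v‖ = N v) (A : Matrix (Fin n) (Fin n) ℝ)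
    (f : E →L[ℝ] E) (hf : ∀ v, f (e v) = e (A *ᵥ v)) : opNorm N A = ‖f‖ := by
  rw [← f.sSup_sphere_eq_norm, opNorm]
  congr 1
  ext r
  constructor
  · rintro ⟨v, hv, rfl⟩
    exact ⟨e v, by simpa [he] using hv, by simp [hf, he]⟩
  · rintro ⟨y, hy, rfl⟩
    refine ⟨e.symm y, ?_, ?_⟩
    · simpa [← he] using hy
    · simp [← he, ← hf]

theorem ContinuousLinearMap.exists_tendsto_norm_one_add_smul_sub_one_div [Nontrivial E]
    (A : E →L[ℝ] E) :
    ∃ L, Tendsto (fun h : ℝ => (‖1 + h • A‖ - 1) / h) (𝓝[>] 0) (𝓝 L) := by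
  have hconv : ConvexOn ℝ univ (fun h : ℝ => ‖1 + h • A‖) :=
    convexOn_univ_norm.comp_affineMap (AffineMap.lineMap (k := ℝ) (1 : E →L[ℝ] E) (1 + A))
      |>.congr fun h _ => by simp [AffineMap.lineMap_apply_module', add_comm]
  have hderiv := hconv.hasDerivWithinAt_rightDeriv_of_mem_interior (x := 0) (by simp)
  refine ⟨_, ((hasDerivWithinAt_iff_tendsto_slope' self_notMem_Ioi).1 hderiv).congr fun h => ?_⟩
  simp [slope_def_field]

theorem norm_sub_norm_div_le {A : E →L[ℝ] E} {h : ℝ} (hh : 0 < h) (u v : E) :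
    (‖v‖ - ‖u‖) / h ≤ (‖1 + h • A‖ - 1) / h * ‖u‖ + ‖h⁻¹ • (v - u) - A u‖ := by
  have hv : v = (1 + h • A) u + h • (h⁻¹ • (v - u) - A u) := by
    rw [smul_sub, smul_inv_smul₀ hh.ne']
    simp
  have hle : ‖v‖ ≤ ‖1 + h • A‖ * ‖u‖ + h * ‖h⁻¹ • (v - u) - A u‖ := by
    calc ‖v‖ ≤ ‖(1 + h • A) u‖ + ‖h • (h⁻¹ • (v - u) - A u)‖ := by
          nth_rw 1 [hv]; exact norm_add_le _ _
      _ ≤ _ := by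
        rw [norm_smul, Real.norm_of_nonneg hh.le]
        gcongr
        exact (1 + h • A).le_opNorm u
  rw [div_mul_eq_mul_div, div_add' _ _ _ hh.ne']
  gcongr
  linarith

theorem limsup_norm_slope_le {A : E →L[ℝ] E} {L : ℝ}
    (hL : Tendsto (fun h : ℝ => (‖1 + h • A‖ - 1) / h) (𝓝[>] 0) (𝓝 L))
    {x : ℝ → E} {t : ℝ} (hx : HasDerivAt x (A (x t)) t) :
    limsup (fun h => (‖x (t + h)‖ - ‖x t‖) / h) (𝓝[>] 0) ≤ L * ‖x t‖ := by
  have hslope := hx.tendsto_slope_zero_right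
  have hrem : Tendsto (fun h : ℝ => ‖h⁻¹ • (x (t + h) - x t) - A (x t)‖) (𝓝[>] 0) (𝓝 0) := by
    simpa using (hslope.sub_const (A (x t))).norm
  have hupper : Tendsto (fun h : ℝ => (‖1 + h • A‖ - 1) / h * ‖x t‖
      + ‖h⁻¹ • (x (t + h) - x t) - A (x t)‖) (𝓝[>] 0) (𝓝 (L * ‖x t‖)) := by
    simpa using (hL.mul_const ‖x t‖).add hrem
  have hlower : ∀ᶠ h in 𝓝[>] (0 : ℝ),
      -(‖A (x t)‖ + 1) ≤ (‖x (t + h)‖ - ‖x t‖) / h := by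
    filter_upwards [hslope.norm.eventually (gt_mem_nhds (lt_add_one _)), self_mem_nhdsWithin]
      with h hlt (hh : 0 < h)
    rw [norm_smul, Real.norm_of_nonneg (inv_nonneg.2 hh.le), inv_mul_eq_div] at hlt
    rw [neg_le, ← neg_div, neg_sub]
    have := (norm_sub_norm_le (x t) (x (t + h))).trans_eq (norm_sub_rev _ _)
    exact ((div_le_div_of_nonneg_right this hh.le).trans_lt hlt).le
  calc limsup (fun h => (‖x (t + h)‖ - ‖x t‖) / h) (𝓝[>] 0)
      ≤ limsup (fun h : ℝ => (‖1 + h • A‖ - 1) / h * ‖x t‖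
          + ‖h⁻¹ • (x (t + h) - x t) - A (x t)‖) (𝓝[>] 0) :=
        limsup_le_limsup (eventually_nhdsWithin_of_forall fun h hh => norm_sub_norm_div_le hh _ _)
          (isCoboundedUnder_le_of_eventually_le _ hlower) hupper.isBoundedUnder_le
    _ = L * ‖x t‖ := hupper.limsup_eq

end NormedSpace

theorem stmt1_general {n : ℕ} (N : (Fin n → ℝ) → ℝ) (hN : IsNorm N) (c : ℝ)
    (M : Matrix (Fin n) (Fin n) ℝ) (hM : logNorm N M ≤ c)
    (x : ℝ → Fin n → ℝ) (t : ℝ)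
    (hx : HasDerivAt x (M.mulVec (x t)) t) :
    diniDeriv (fun τ => N (x τ)) t ≤ c * N (x t) := by
  obtain ⟨E, _, _, e, he⟩ := hN.exists_linearEquiv_norm_eq
  have : FiniteDimensional ℝ E := e.finiteDimensional
  simp only [diniDeriv, ← he]
  rcases subsingleton_or_nontrivial E with hE | hE
  · simp [Subsingleton.elim _ (0 : E)]
  let f : E →L[ℝ] E := LinearMap.toContinuousLinearMap (e.conj (Matrix.toLin' M))
  have hf : ∀ h : ℝ, opNorm N (1 + h • M) = ‖1 + h • f‖ := fun h =>
    opNorm_eq_norm_of_intertwines e he _ _ fun v => by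
      simp [f, LinearEquiv.conj_apply, add_mulVec, smul_mulVec]
  obtain ⟨L, hL⟩ := f.exists_tendsto_norm_one_add_smul_sub_one_div
  have hLc : L ≤ c := by
    simp only [logNorm, hf] at hM
    rwa [hL.limUnder_eq] at hM
  have hex : HasDerivAt (e ∘ x) (f (e (x t))) t := by
    simpa [f, LinearEquiv.conj_apply] using
      (LinearMap.toContinuousLinearMap e.toLinearMap).hasFDerivAt.comp_hasDerivAt t hx
  exact (limsup_norm_slope_le hL hex).trans (mul_le_mul_of_nonneg_right hLc (norm_nonneg _))

theorem stmt1 {n : ℕ} (N : (Fin n → ℝ) → ℝ) (hN : IsNorm N) (c : ℝ)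
    (M : Matrix (Fin n) (Fin n) ℝ) (hM : logNorm N M ≤ c)
    (t₀ T : ℝ) (x : ℝ → Fin n → ℝ) (t : ℝ) (ht : t ∈ Ioo t₀ T)
    (hx : HasDerivAt x (M.mulVec (x t)) t) :
    diniDeriv (fun τ => N (x τ)) t ≤ c * N (x t) :=
  stmt1_general N hN c M hM x t hx
end

section
/- Let |·| be a norm on ℝⁿ with induced logarithmic norm μ, let f : ℝⁿ → ℝⁿ be continuously differentiable, let X ⊆ ℝⁿ be convex, and suppose μ(Df(x)) ≤ c for every x ∈ X. Then for any two trajectories x and x' of ẋ = f(x) that remain in X on [0, T], |x(t) − x'(t)| ≤ e^{ct} |x(0) − x'(0)| for every t ∈ [0, T]. -/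
open Filter Topology Set Matrix

/-- The Jacobian matrix of `f : ℝⁿ → ℝⁿ` at `x`: `(Df(x))_{ij} = ∂f_i/∂x_j(x)`. -/
noncomputable def jacMatrix {n m : ℕ} (f : (Fin n → ℝ) → (Fin m → ℝ)) (x : Fin n → ℝ) :
    Matrix (Fin m) (Fin n) ℝ :=
  fun i j => fderiv ℝ f x (Pi.single j 1) i

/-!
For `a, b ∈ X` and `h > 0`, the mean value inequality for `z ↦ z + h • f z` on the segment
`[b, a]` bounds `‖(a - b) + h • (f a - f b)‖` by `sup_z ‖1 + h • Df z‖ * ‖a - b‖`. Since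
`(‖1 + h • A‖ - 1) / h` is monotone in `h` and tends to `μ(A) ≤ c`, compactness of the segment
makes this at most `(1 + h * (c + ε)) * ‖a - b‖` for all small `h`. So the upper right Dini
derivative of `t ↦ ‖x t - x' t‖` is at most `c * ‖x t - x' t‖`, and Grönwall's inequality
concludes. To use Mathlib's operator norm, `ℝⁿ` is given the norm `N` as a type synonym.
-/

theorem tendsto_sub_nhdsGT (t : ℝ) : Tendsto (· - t) (𝓝[>] t) (𝓝[>] 0) :=
  tendsto_nhdsWithin_of_tendsto_nhds_of_eventually_within _
    ((continuous_sub_right t).tendsto' t 0 (sub_self t) |>.mono_left nhdsWithin_le_nhds)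
    (eventually_nhdsWithin_of_forall fun _ hz => mem_Ioi.2 (sub_pos.2 hz))

theorem le_mul_exp_of_liminf_slope_le {g : ℝ → ℝ} {K a b : ℝ} (hg : ContinuousOn g (Icc a b))
    (hg' : ∀ t ∈ Ioo a b, ∀ r, K * g t < r → ∃ᶠ z in 𝓝[>] t, (z - t)⁻¹ * (g z - g t) < r) :
    ∀ t ∈ Icc a b, g t ≤ g a * Real.exp (K * (t - a)) := by
  rintro t ⟨hat, htb⟩
  rcases hat.eq_or_lt with rfl | hat
  · simp
  have hshift : ∀ s ∈ Ioo a t, g t ≤ g s * Real.exp (K * (t - s)) := fun s hs => by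
    have := le_gronwallBound_of_liminf_deriv_right_le (hg.mono (Icc_subset_Icc hs.1.le htb))
      (fun z hz => hg' z ⟨hs.1.trans_le hz.1, hz.2.trans_le htb⟩) le_rfl
      (fun _ _ => (add_zero _).ge) t ⟨hs.2.le, le_rfl⟩
    rwa [gronwallBound_ε0] at this
  have hlim : Tendsto (fun s => g s * Real.exp (K * (t - s))) (𝓝[Ioo a t] a)
      (𝓝 (g a * Real.exp (K * (t - a)))) :=
    (((hg a ⟨le_rfl, hat.le.trans htb⟩).mono (Ioo_subset_Icc_self.trans
      (Icc_subset_Icc le_rfl htb))).tendsto).mul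
      (by fun_prop : Continuous fun s => Real.exp (K * (t - s))).continuousWithinAt.tendsto
  have : (𝓝[Ioo a t] a).NeBot := left_nhdsWithin_Ioo_neBot hat
  exact ge_of_tendsto hlim (eventually_nhdsWithin_of_forall hshift)

section OneSidedBounds

variable {V : Type*} [SeminormedAddCommGroup V] [NormedSpace ℝ V]

theorem norm_add_smul_le_of_le {e v : V} (he : ‖e‖ ≤ 1) {h h' κ : ℝ} (hh : 0 ≤ h) (hhh' : h ≤ h')
    (H : ‖e + h' • v‖ ≤ 1 + h' * κ) : ‖e + h • v‖ ≤ 1 + h * κ := by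
  rcases hh.eq_or_lt with rfl | hpos
  · simpa using he
  have hh' : 0 < h' := hpos.trans_le hhh'
  set θ := h / h'
  have hθ : θ * h' = h := div_mul_cancel₀ h hh'.ne'
  have hθ0 : 0 ≤ θ := by positivity
  have hθ1 : θ ≤ 1 := div_le_one_of_le₀ hhh' hh'.le
  calc ‖e + h • v‖ = ‖(1 - θ) • e + θ • (e + h' • v)‖ := by
        rw [smul_add, smul_smul, hθ]; congr 1; module
    _ ≤ (1 - θ) * ‖e‖ + θ * ‖e + h' • v‖ := by
        refine (norm_add_le _ _).trans_eq ?_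
        rw [norm_smul, norm_smul, Real.norm_of_nonneg (sub_nonneg.2 hθ1), Real.norm_of_nonneg hθ0]
    _ ≤ (1 - θ) * 1 + θ * (1 + h' * κ) := by gcongr
    _ = 1 + h * κ := by rw [← hθ]; ring

theorem IsCompact.eventually_forall_norm_add_smul_le {Z : Type*} [TopologicalSpace Z] {K : Set Z}
    (hK : IsCompact K) {e : V} (he : ‖e‖ ≤ 1) {B : Z → V} (hB : ContinuousOn B K) {c : ℝ}
    (hc : ∀ z ∈ K, ∀ c' > c, ∀ᶠ h in 𝓝[>] 0, ‖e + h • B z‖ ≤ 1 + h * c') :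
    ∀ c' > c, ∀ᶠ h in 𝓝[>] 0, ∀ z ∈ K, ‖e + h • B z‖ ≤ 1 + h * c' := by
  intro c' hc'
  obtain ⟨c'', hcc'', hc''c'⟩ := exists_between hc'
  refine hK.induction_on
    (p := fun S => ∀ᶠ h in 𝓝[>] (0 : ℝ), ∀ z ∈ S, ‖e + h • B z‖ ≤ 1 + h * c')
    (by simp) (fun S S' hSS' hS' => hS'.mono fun h H z hz => H z (hSS' hz))
    (fun S S' hS hS' => (hS.and hS').mono fun h H z hz => hz.elim (H.1 z) (H.2 z)) ?_
  intro z hz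
  obtain ⟨h₁, hh₁, hpos⟩ := ((hc z hz c'' hcc'').and self_mem_nhdsWithin).exists
  have hlt : ‖e + h₁ • B z‖ < 1 + h₁ * c' := hh₁.trans_lt (by gcongr)
  refine ⟨_, (continuousWithinAt_const.add ((hB z hz).const_smul h₁)).norm.eventually
    (gt_mem_nhds hlt), ?_⟩
  filter_upwards [Ioc_mem_nhdsGT hpos] with h hh z' hz'
  exact norm_add_smul_le_of_le he hh.1.le hh.2 (le_of_lt hz')

theorem exists_tendsto_norm_add_smul_sub_norm_div (e v : V) :
    ∃ μ, Tendsto (fun h => (‖e + h • v‖ - ‖e‖) / h) (𝓝[>] 0) (𝓝 μ) := by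
  have hconv : ConvexOn ℝ univ fun h : ℝ => ‖e + h • v‖ := by
    refine ⟨convex_univ, fun a _ b _ α β hα hβ hαβ => ?_⟩
    calc ‖e + (α • a + β • b) • v‖ = ‖α • (e + a • v) + β • (e + b • v)‖ := by
          congr 1; rw [smul_add, smul_add, smul_smul, smul_smul, add_add_add_comm, ← add_smul, hαβ,
            one_smul, add_smul, smul_eq_mul, smul_eq_mul]
      _ ≤ α * ‖e + a • v‖ + β * ‖e + b • v‖ := by
          refine (norm_add_le _ _).trans_eq ?_
          rw [norm_smul, norm_smul, Real.norm_of_nonneg hα, Real.norm_of_nonneg hβ]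
  have := hconv.hasDerivWithinAt_rightDeriv_of_mem_interior (by simp : (0 : ℝ) ∈ interior univ)
  refine ⟨_, ((hasDerivWithinAt_iff_tendsto_slope' self_notMem_Ioi).1 this).congr' ?_⟩
  filter_upwards with h
  simp [slope_def_field]

end OneSidedBounds

section NormedSpace

variable {E : Type*} [NormedAddCommGroup E] [NormedSpace ℝ E]

theorem eventually_norm_sub_add_smul_sub_le {f : E → E} (hf : ContDiff ℝ 1 f) {a b : E} {c : ℝ}
    (hμ : ∀ y ∈ segment ℝ b a, ∀ c' > c, ∀ᶠ h in 𝓝[>] 0, ‖1 + h • fderiv ℝ f y‖ ≤ 1 + h * c') :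
    ∀ c' > c, ∀ᶠ h in 𝓝[>] 0, ‖(a - b) + h • (f a - f b)‖ ≤ (1 + h * c') * ‖a - b‖ := by
  intro c' hc'
  have hK : IsCompact (segment ℝ b a) := by
    rw [segment_eq_image_lineMap]; exact isCompact_Icc.image AffineMap.lineMap_continuous
  filter_upwards [hK.eventually_forall_norm_add_smul_le ContinuousLinearMap.norm_id_le
    (hf.continuous_fderiv one_ne_zero).continuousOn hμ c' hc'] with h hh
  have hderiv : ∀ y, HasFDerivAt (fun z => z + h • f z) (1 + h • fderiv ℝ f y) y := fun y =>
    (hasFDerivAt_id y).add ((hf.differentiable one_ne_zero y).hasFDerivAt.const_smul h)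
  have := (convex_segment b a).norm_image_sub_le_of_norm_hasFDerivWithin_le
    (fun y _ => (hderiv y).hasFDerivWithinAt) hh (left_mem_segment ℝ b a) (right_mem_segment ℝ b a)
  convert this using 2
  simp only [smul_sub]; abel

theorem eventually_slope_norm_lt {y : ℝ → E} {w : E} {t ρ r : ℝ} (hy : HasDerivAt y w t)
    (hρr : ρ < r) (hρ : ∀ᶠ h in 𝓝[>] 0, ‖y t + h • w‖ ≤ ‖y t‖ + h * ρ) :
    ∀ᶠ z in 𝓝[>] t, (z - t)⁻¹ * (‖y z‖ - ‖y t‖) < r := by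
  have hlin : ∀ᶠ z in 𝓝 t, ‖y z - y t - (z - t) • w‖ ≤ (r - ρ) / 2 * ‖z - t‖ :=
    (hasDerivAt_iff_isLittleO.1 hy).def (by linarith)
  filter_upwards [(tendsto_sub_nhdsGT t).eventually hρ, nhdsWithin_le_nhds hlin,
    self_mem_nhdsWithin] with z hz hlz (hzt : t < z)
  have hpos : 0 < z - t := sub_pos.2 hzt
  rw [Real.norm_of_nonneg hpos.le] at hlz
  have htri : ‖y z‖ ≤ ‖y t + (z - t) • w‖ + ‖y z - y t - (z - t) • w‖ := by
    simpa [sub_sub] using norm_le_insert' (y z) (y t + (z - t) • w)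
  rw [inv_mul_lt_iff₀ hpos]
  nlinarith

/-- `hμ` says `limsup_{h → 0⁺} (‖1 + h • Df y‖ - 1) / h ≤ c`, i.e. `μ(Df y) ≤ c` without
presupposing that the limit exists. -/
theorem norm_sub_le_exp_mul_of_logNorm_le {f : E → E} (hf : ContDiff ℝ 1 f) {X : Set E}
    (hX : Convex ℝ X) {c : ℝ}
    (hμ : ∀ y ∈ X, ∀ c' > c, ∀ᶠ h in 𝓝[>] 0, ‖1 + h • fderiv ℝ f y‖ ≤ 1 + h * c')
    {T : ℝ} {x x' : ℝ → E} (hxc : ContinuousOn x (Icc 0 T)) (hx'c : ContinuousOn x' (Icc 0 T))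
    (hxd : ∀ t ∈ Ioo 0 T, HasDerivAt x (f (x t)) t)
    (hx'd : ∀ t ∈ Ioo 0 T, HasDerivAt x' (f (x' t)) t)
    (hxX : ∀ t ∈ Icc 0 T, x t ∈ X) (hx'X : ∀ t ∈ Icc 0 T, x' t ∈ X) :
    ∀ t ∈ Icc 0 T, ‖x t - x' t‖ ≤ Real.exp (c * t) * ‖x 0 - x' 0‖ := by
  intro t ht
  have := le_mul_exp_of_liminf_slope_le (g := fun s => ‖x s - x' s‖) (K := c)
    (hxc.sub hx'c).norm ?_ t ht
  · simpa [mul_comm] using this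
  intro s hs r hr
  obtain ⟨c', hc', hc'r⟩ : ∃ c' > c, c' * ‖x s - x' s‖ < r :=
    ((continuous_mul_const _).continuousAt.eventually (gt_mem_nhds hr)).exists_gt
  have hsX := Ioo_subset_Icc_self hs
  refine (eventually_slope_norm_lt ((hxd s hs).sub (hx'd s hs)) hc'r ?_).frequently
  filter_upwards [eventually_norm_sub_add_smul_sub_le hf
    (fun y hy => hμ y (hX.segment_subset (hx'X s hsX) (hxX s hsX) hy)) c' hc'] with h hh
  simp only [Pi.sub_apply]
  linarith

end NormedSpace

theorem IsNorm.map_zero_s11 {n : ℕ} {N : (Fin n → ℝ) → ℝ} (hN : IsNorm N) : N 0 = 0 := by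
  simpa using hN.2.1 0 0

theorem IsNorm.nonneg_s11 {n : ℕ} {N : (Fin n → ℝ) → ℝ} (hN : IsNorm N) (v : Fin n → ℝ) :
    0 ≤ N v := by
  have h := hN.1 v (-v)
  rw [add_neg_cancel, hN.map_zero_s11, ← neg_one_smul ℝ v, hN.2.1] at h
  norm_num at h
  linarith

theorem jacMatrix_mulVec {n : ℕ} (f : (Fin n → ℝ) → (Fin n → ℝ)) (z v : Fin n → ℝ) :
    jacMatrix f z *ᵥ v = fderiv ℝ f z v :=
  LinearMap.toMatrix'_mulVec _ v

def WithNorm {n : ℕ} (_N : (Fin n → ℝ) → ℝ) : Type := Fin n → ℝ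

namespace WithNorm

variable {n : ℕ} (N : (Fin n → ℝ) → ℝ)

instance : AddCommGroup (WithNorm N) := inferInstanceAs (AddCommGroup (Fin n → ℝ))
instance : Module ℝ (WithNorm N) := inferInstanceAs (Module ℝ (Fin n → ℝ))
instance : FiniteDimensional ℝ (WithNorm N) := inferInstanceAs (FiniteDimensional ℝ (Fin n → ℝ))
instance : Norm (WithNorm N) := ⟨N⟩

theorem normedSpaceCore {N : (Fin n → ℝ) → ℝ} (hN : IsNorm N) :
    NormedSpace.Core ℝ (WithNorm N) :=
  ⟨⟨hN.nonneg_s11, hN.2.1, hN.1⟩, fun v => ⟨hN.2.2 v, fun hv => hv ▸ hN.map_zero_s11⟩⟩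

variable [hN : Fact (IsNorm N)]

noncomputable instance : NormedAddCommGroup (WithNorm N) := .ofCore (normedSpaceCore hN.out)
noncomputable instance : NormedSpace ℝ (WithNorm N) := .ofCore (normedSpaceCore hN.out)

noncomputable def equiv : (Fin n → ℝ) ≃L[ℝ] WithNorm N :=
  LinearEquiv.toContinuousLinearEquiv (LinearEquiv.refl ℝ (Fin n → ℝ))

theorem opNorm_eq_norm {M : Matrix (Fin n) (Fin n) ℝ} {L : WithNorm N →L[ℝ] WithNorm N}
    (hML : ∀ v, equiv N (M *ᵥ v) = L (equiv N v)) : opNorm N M = ‖L‖ := by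
  rw [← L.sSup_sphere_eq_norm, opNorm]
  congr 1
  ext r
  simp only [mem_image, mem_ofPred_eq, mem_sphere_zero_iff_norm]
  exact ⟨fun ⟨v, hv, hr⟩ => ⟨equiv N v, hv, (congrArg norm (hML v)).symm.trans hr⟩,
    fun ⟨v, hv, hr⟩ => ⟨(equiv N).symm v, hv,
      (congrArg norm (hML _)).trans (by rwa [ContinuousLinearEquiv.apply_symm_apply])⟩⟩

theorem eventually_norm_one_add_smul_le_of_logNorm_le {M : Matrix (Fin n) (Fin n) ℝ}
    {L : WithNorm N →L[ℝ] WithNorm N} (hML : ∀ v, equiv N (M *ᵥ v) = L (equiv N v)) {c : ℝ}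
    (hM : logNorm N M ≤ c) : ∀ c' > c, ∀ᶠ h in 𝓝[>] 0, ‖1 + h • L‖ ≤ 1 + h * c' := by
  intro c' hc'
  rcases subsingleton_or_nontrivial (WithNorm N) with hE | hE
  -- on the zero space `logNorm N M` is a junk value, but the bound is trivial there
  · have : Tendsto (fun h : ℝ => 1 + h * c') (𝓝[>] 0) (𝓝 1) :=
      ((by fun_prop : Continuous fun h : ℝ => 1 + h * c').tendsto' 0 1 (by simp)).mono_left
        nhdsWithin_le_nhds
    filter_upwards [this.eventually (lt_mem_nhds one_pos)] with h hh
    rw [Subsingleton.elim (1 + h • L) 0, norm_zero]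
    exact hh.le
  obtain ⟨μ, hlim⟩ :=
    exists_tendsto_norm_add_smul_sub_norm_div (1 : WithNorm N →L[ℝ] WithNorm N) L
  rw [norm_one] at hlim
  have hμ : logNorm N M = μ := by
    refine Tendsto.limUnder_eq (hlim.congr fun h => ?_)
    rw [opNorm_eq_norm N (L := 1 + h • L) fun v => ?_]
    simp [Matrix.add_mulVec, Matrix.smul_mulVec, ← hML]
  filter_upwards [hlim.eventually (gt_mem_nhds (hμ ▸ hM |>.trans_lt hc')), self_mem_nhdsWithin]
    with h hh (hpos : 0 < h)
  rw [div_lt_iff₀ hpos] at hh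
  linarith

end WithNorm

theorem stmt11_general {n : ℕ} (N : (Fin n → ℝ) → ℝ) (hN : IsNorm N)
    (f : (Fin n → ℝ) → (Fin n → ℝ)) (hf : ContDiff ℝ 1 f)
    (X : Set (Fin n → ℝ)) (hX : Convex ℝ X) (c : ℝ)
    (hμ : ∀ x ∈ X, logNorm N (jacMatrix f x) ≤ c)
    (T : ℝ)
    (x x' : ℝ → Fin n → ℝ)
    (hxc : ContinuousOn x (Icc 0 T)) (hx'c : ContinuousOn x' (Icc 0 T))
    (hxd : ∀ t ∈ Ioo (0:ℝ) T, HasDerivAt x (f (x t)) t)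
    (hx'd : ∀ t ∈ Ioo (0:ℝ) T, HasDerivAt x' (f (x' t)) t)
    (hxX : ∀ t ∈ Icc (0:ℝ) T, x t ∈ X) (hx'X : ∀ t ∈ Icc (0:ℝ) T, x' t ∈ X) :
    ∀ t ∈ Icc (0:ℝ) T, N (x t - x' t) ≤ Real.exp (c * t) * N (x 0 - x' 0) := by
  have : Fact (IsNorm N) := ⟨hN⟩
  set e := WithNorm.equiv N
  have hfderiv : ∀ y w,
      fderiv ℝ (e ∘ f ∘ e.symm) y w = e (fderiv ℝ f (e.symm y) (e.symm w)) := by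
    intro y w
    rw [e.comp_fderiv, e.symm.comp_right_fderiv]
    rfl
  exact norm_sub_le_exp_mul_of_logNorm_le (X := e.symm ⁻¹' X) (x := e ∘ x) (x' := e ∘ x')
    (e.contDiff.comp (hf.comp e.symm.contDiff))
    (hX.linear_preimage e.symm.toLinearEquiv.toLinearMap)
    (fun y hy => WithNorm.eventually_norm_one_add_smul_le_of_logNorm_le N
      (fun v => by simp [e, hfderiv, jacMatrix_mulVec]) (hμ (e.symm y) hy))
    (e.continuous.comp_continuousOn hxc) (e.continuous.comp_continuousOn hx'c)
    (fun t ht => by simpa using e.hasFDerivAt.comp_hasDerivAt t (hxd t ht))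
    (fun t ht => by simpa using e.hasFDerivAt.comp_hasDerivAt t (hx'd t ht))
    (fun t ht => by simpa using hxX t ht) (fun t ht => by simpa using hx'X t ht)

theorem stmt11 {n : ℕ} (N : (Fin n → ℝ) → ℝ) (hN : IsNorm N)
    (f : (Fin n → ℝ) → (Fin n → ℝ)) (hf : ContDiff ℝ 1 f)
    (X : Set (Fin n → ℝ)) (hX : Convex ℝ X) (c : ℝ)
    (hμ : ∀ x ∈ X, logNorm N (jacMatrix f x) ≤ c)
    (T : ℝ) (hT : 0 ≤ T)
    (x x' : ℝ → Fin n → ℝ)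
    (hxc : ContinuousOn x (Icc 0 T)) (hx'c : ContinuousOn x' (Icc 0 T))
    (hxd : ∀ t ∈ Ioo (0:ℝ) T, HasDerivAt x (f (x t)) t)
    (hx'd : ∀ t ∈ Ioo (0:ℝ) T, HasDerivAt x' (f (x' t)) t)
    (hxX : ∀ t ∈ Icc (0:ℝ) T, x t ∈ X) (hx'X : ∀ t ∈ Icc (0:ℝ) T, x' t ∈ X) :
    ∀ t ∈ Icc (0:ℝ) T, N (x t - x' t) ≤ Real.exp (c * t) * N (x 0 - x' 0) :=
  stmt11_general N hN f hf X hX c hμ T x x' hxc hx'c hxd hx'd hxX hx'X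
end
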